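/- Let (X,T) be a minimal topological dynamical system. Then (X,T) is either logarithmically mean equicontinuous or logarithmically mean sensitive. -/
import Mathlib

open Filter

/-- The `n`-th harmonic number `H_n = ∑_{k=1}^n 1/k` as a real number. -/
noncomputable def H (n : ℕ) : ℝ := ∑ k ∈ Finset.range n, (1 : ℝ) / (k + 1)

/-- A TDS `(X,T)` is logarithmically mean equicontinuous if for every `ε > 0` there is `δ > 0`
such that `d(x,y) < δ` implies
`limsup_n (1/H_n) ∑_{k=1}^n (1/k) d(T^{k-1}x, T^{k-1}y) < ε`. -/
def LogMeanEquicontinuous {X : Type*} [MetricSpace X] (T : X → X) : Prop :=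
  ∀ ε > (0 : ℝ), ∃ δ > (0 : ℝ), ∀ x y : X, dist x y < δ →
    limsup (fun n : ℕ =>
      (1 / H n) * ∑ k ∈ Finset.range n, (1 / (k + 1 : ℝ)) * dist (T^[k] x) (T^[k] y)) atTop < ε

/-- A TDS `(X,T)` is logarithmically mean sensitive if there is `ε > 0` such that for every
`x ∈ X` and `δ > 0` there is `y` with `d(x,y) < δ` and
`limsup_n (1/H_n) ∑_{k=1}^n (1/k) d(T^{k-1}x, T^{k-1}y) ≥ ε`. -/
def LogMeanSensitive {X : Type*} [MetricSpace X] (T : X → X) : Prop :=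
  ∃ ε > (0 : ℝ), ∀ x : X, ∀ δ > (0 : ℝ), ∃ y : X, dist x y < δ ∧
    ε ≤ limsup (fun n : ℕ =>
      (1 / H n) * ∑ k ∈ Finset.range n, (1 / (k + 1 : ℝ)) * dist (T^[k] x) (T^[k] y)) atTop

section Aux

variable {X : Type*} [MetricSpace X] [CompactSpace X] [Nonempty X]

/-- The log-averaged orbit distance sequence. -/
noncomputable def lf (T : X → X) (x y : X) (n : ℕ) : ℝ :=
  (1 / H n) * ∑ k ∈ Finset.range n, (1 / (k + 1 : ℝ)) * dist (T^[k] x) (T^[k] y)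

/-- The limsup log-averaged orbit distance. -/
noncomputable def LD (T : X → X) (x y : X) : ℝ := limsup (lf T x y) atTop

lemma H_nonneg (n : ℕ) : 0 ≤ H n := by
  unfold H; positivity

lemma H_pos {n : ℕ} (hn : 1 ≤ n) : 0 < H n := by
  have : (1:ℝ)/((0:ℕ)+1) ≤ H n :=
    Finset.single_le_sum (f := fun k : ℕ => (1:ℝ)/(k+1))
      (fun i _ => by positivity) (Finset.mem_range.mpr hn)
  norm_num at this
  linarith

lemma H_mono : Monotone H := fun a b hab =>
  Finset.sum_le_sum_of_subset_of_nonneg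
    (Finset.range_subset_range.mpr hab) (fun i _ _ => by positivity)

lemma H_tendsto : Tendsto H atTop atTop :=
  Real.tendsto_sum_range_one_div_nat_succ_atTop

lemma lf_nonneg (T : X → X) (x y : X) (n : ℕ) : 0 ≤ lf T x y n := by
  have h1 : (0:ℝ) ≤ 1 / H n := by
    have := H_nonneg n; positivity
  exact mul_nonneg h1 (Finset.sum_nonneg fun i _ => by positivity)

noncomputable def diamX (X : Type*) [MetricSpace X] : ℝ := Metric.diam (Set.univ : Set X)

lemma dist_le_diamX (x y : X) : dist x y ≤ diamX X :=
  Metric.dist_le_diam_of_mem isCompact_univ.isBounded trivial trivial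

lemma lf_le_diamX (T : X → X) (x y : X) (n : ℕ) : lf T x y n ≤ diamX X := by
  have hC : 0 ≤ diamX X := Metric.diam_nonneg
  rcases Nat.eq_zero_or_pos n with rfl | hn
  · simp [lf, H, hC]
  · have hH : 0 < H n := H_pos hn
    have hsum : ∑ k ∈ Finset.range n, (1 / (k + 1 : ℝ)) * dist (T^[k] x) (T^[k] y)
        ≤ H n * diamX X := by
      rw [H, Finset.sum_mul]
      refine Finset.sum_le_sum fun i _ => ?_
      have : dist (T^[i] x) (T^[i] y) ≤ diamX X := dist_le_diamX _ _
      have h1 : (0:ℝ) ≤ 1/(i+1) := by positivity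
      nlinarith
    have := mul_le_mul_of_nonneg_left hsum (le_of_lt (by positivity : (0:ℝ) < 1 / H n))
    calc lf T x y n ≤ (1 / H n) * (H n * diamX X) := this
      _ = diamX X := by field_simp

lemma lf_boundedUnder_le (T : X → X) (x y : X) :
    IsBoundedUnder (· ≤ ·) atTop (lf T x y) :=
  isBoundedUnder_of ⟨diamX X, fun n => lf_le_diamX T x y n⟩

lemma lf_boundedUnder_ge (T : X → X) (x y : X) :
    IsBoundedUnder (· ≥ ·) atTop (lf T x y) :=
  isBoundedUnder_of ⟨0, fun n => lf_nonneg T x y n⟩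

lemma lf_coboundedUnder_le (T : X → X) (x y : X) :
    IsCoboundedUnder (· ≤ ·) atTop (lf T x y) :=
  (lf_boundedUnder_ge T x y).isCoboundedUnder_le

lemma LD_symm (T : X → X) (x y : X) : LD T x y = LD T y x := by
  unfold LD lf
  simp_rw [dist_comm (T^[_] x) (T^[_] y)]

lemma LD_triangle (T : X → X) (x y z : X) : LD T x z ≤ LD T x y + LD T y z := by
  have hpt : ∀ n, lf T x z n ≤ lf T x y n + lf T y z n := by
    intro n
    unfold lf
    rw [← mul_add, ← Finset.sum_add_distrib]
    have h1 : (0:ℝ) ≤ 1 / H n := by have := H_nonneg n; positivity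
    refine mul_le_mul_of_nonneg_left (Finset.sum_le_sum fun i _ => ?_) h1
    rw [← mul_add]
    have h2 : (0:ℝ) ≤ 1/(i+1) := by positivity
    exact mul_le_mul_of_nonneg_left (dist_triangle _ _ _) h2
  calc LD T x z ≤ limsup (lf T x y + lf T y z) atTop := by
        refine limsup_le_limsup (Eventually.of_forall hpt) (lf_coboundedUnder_le T x z) ?_
        exact isBoundedUnder_of ⟨diamX X + diamX X,
          fun n => add_le_add (lf_le_diamX T x y n) (lf_le_diamX T y z n)⟩
    _ ≤ LD T x y + LD T y z :=
        limsup_add_le (lf_boundedUnder_ge T x y) (lf_boundedUnder_le T x y)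
          (lf_coboundedUnder_le T y z) (lf_boundedUnder_le T y z)

lemma LD_shift (T : X → X) (x y : X) : LD T x y ≤ LD T (T x) (T y) := by
  have key : ∀ n : ℕ, lf T x y (n + 1) ≤ dist x y / H (n + 1) + lf T (T x) (T y) n := by
    intro n
    have hH1 : 0 < H (n + 1) := H_pos (Nat.le_add_left 1 n)
    have step1 : lf T x y (n + 1) ≤
        (1 / H (n + 1)) * (dist x y +
          ∑ k ∈ Finset.range n, (1 / (k + 1 : ℝ)) * dist (T^[k] (T x)) (T^[k] (T y))) := by
      unfold lf
      refine mul_le_mul_of_nonneg_left ?_ (by positivity)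
      rw [Finset.sum_range_succ']
      simp only [Function.iterate_succ_apply, Function.iterate_zero_apply]
      rw [add_comm (dist x y)]
      refine add_le_add (Finset.sum_le_sum fun i _ => ?_) (by norm_num)
      have hd : (0:ℝ) ≤ dist (T^[i] (T x)) (T^[i] (T y)) := dist_nonneg
      have hc : (1 / ((i:ℝ) + 1 + 1)) ≤ 1 / ((i:ℝ) + 1) := by
        apply one_div_le_one_div_of_le
        · positivity
        · linarith
      push_cast
      exact mul_le_mul_of_nonneg_right hc hd
    have step2 : (1 / H (n + 1)) * (dist x y +
          ∑ k ∈ Finset.range n, (1 / (k + 1 : ℝ)) * dist (T^[k] (T x)) (T^[k] (T y)))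
        ≤ dist x y / H (n + 1) + lf T (T x) (T y) n := by
      rw [mul_add, one_div_mul_eq_div]
      gcongr _ + ?_
      rcases Nat.eq_zero_or_pos n with rfl | hn
      · simp [lf, H]
      · have hHn : 0 < H n := H_pos hn
        have hmono : H n ≤ H (n + 1) := H_mono (Nat.le_succ n)
        unfold lf
        rw [one_div_mul_eq_div, one_div_mul_eq_div]
        exact div_le_div_of_nonneg_left (Finset.sum_nonneg fun i _ => by positivity) hHn hmono
    exact step1.trans step2
  have h0 : Tendsto (fun n : ℕ => dist x y / H (n + 1)) atTop (nhds 0) := by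
    exact Tendsto.div_atTop tendsto_const_nhds (H_tendsto.comp (tendsto_add_atTop_nat 1))
  have hshift : LD T x y = limsup (fun n : ℕ => lf T x y (n + 1)) atTop :=
    (limsup_nat_add (lf T x y) 1).symm
  rw [hshift]
  have hb1 : IsBoundedUnder (· ≥ ·) atTop (fun n : ℕ => dist x y / H (n + 1)) :=
    isBoundedUnder_of ⟨0, fun n => by
      have := H_nonneg (n + 1); positivity⟩
  have hb2 : IsBoundedUnder (· ≤ ·) atTop (fun n : ℕ => dist x y / H (n + 1)) :=
    h0.isBoundedUnder_le
  calc limsup (fun n : ℕ => lf T x y (n + 1)) atTop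
      ≤ limsup ((fun n : ℕ => dist x y / H (n + 1)) + lf T (T x) (T y)) atTop := by
        refine limsup_le_limsup (Eventually.of_forall key) ?_ ?_
        · exact (isBoundedUnder_of ⟨0, fun n => lf_nonneg T x y (n+1)⟩ :
            IsBoundedUnder (· ≥ ·) atTop _).isCoboundedUnder_le
        · exact isBoundedUnder_of ⟨dist x y / H 1 + diamX X, fun n => by
            refine add_le_add ?_ (lf_le_diamX T (T x) (T y) n)
            have h1 : 0 < H 1 := H_pos le_rfl
            exact div_le_div_of_nonneg_left dist_nonneg h1 (H_mono (Nat.le_add_left 1 n))⟩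
    _ ≤ limsup (fun n : ℕ => dist x y / H (n + 1)) atTop + LD T (T x) (T y) :=
        limsup_add_le hb1 hb2 (lf_coboundedUnder_le T (T x) (T y))
          (lf_boundedUnder_le T (T x) (T y))
    _ = LD T (T x) (T y) := by rw [h0.limsup_eq, zero_add]

lemma LD_iterate (T : X → X) (x y : X) (n : ℕ) : LD T x y ≤ LD T (T^[n] x) (T^[n] y) := by
  induction n with
  | zero => simp
  | succ n ih =>
      calc LD T x y ≤ LD T (T^[n] x) (T^[n] y) := ih
        _ ≤ LD T (T (T^[n] x)) (T (T^[n] y)) := LD_shift T _ _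
        _ = LD T (T^[n+1] x) (T^[n+1] y) := by
            rw [Function.iterate_succ_apply' T n x, Function.iterate_succ_apply' T n y]

end Aux

/-- A minimal topological dynamical system is either logarithmically mean equicontinuous or
logarithmically mean sensitive. -/
theorem minimal_logMeanEquicontinuous_or_logMeanSensitive
    {X : Type*} [MetricSpace X] [CompactSpace X] [Nonempty X]
    (T : X → X) (hT : Continuous T)
    (hmin : ∀ x : X, Dense (Set.range fun n : ℕ => T^[n] x)) :
    LogMeanEquicontinuous T ∨ LogMeanSensitive T := by
  by_cases hs : LogMeanSensitive T
  · exact Or.inr hs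
  left
  unfold LogMeanSensitive at hs
  push_neg at hs
  intro ε hε
  obtain ⟨x₀, δ₀, hδ₀, hx₀⟩ := hs (ε / 5) (by positivity)
  have hx₀' : ∀ y : X, dist x₀ y < δ₀ → LD T x₀ y < ε / 5 := fun y hy => hx₀ y hy
  -- pointwise step
  have key : ∀ x : X, ∃ η > (0:ℝ), ∀ y : X, dist x y < η → LD T x y < 2 * (ε / 5) := by
    intro x
    obtain ⟨z, hz, n, rfl⟩ := Metric.dense_iff.mp (hmin x) x₀ δ₀ hδ₀
    have hzball : dist (T^[n] x) x₀ < δ₀ := by simpa [Metric.mem_ball] using hz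
    have hc : Continuous (T^[n]) := hT.iterate n
    have hopen : IsOpen ((T^[n]) ⁻¹' Metric.ball x₀ δ₀) := Metric.isOpen_ball.preimage hc
    have hxmem : x ∈ (T^[n]) ⁻¹' Metric.ball x₀ δ₀ := by
      simpa [Metric.mem_ball] using hzball
    obtain ⟨η, hη, hball⟩ := Metric.isOpen_iff.mp hopen x hxmem
    refine ⟨η, hη, fun y hy => ?_⟩
    have hymem : T^[n] y ∈ Metric.ball x₀ δ₀ := hball (by
      simpa [Metric.mem_ball, dist_comm] using hy)
    have h1 : LD T x₀ (T^[n] y) < ε / 5 := hx₀' _ (by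
      simpa [Metric.mem_ball, dist_comm] using hymem)
    have h2 : LD T x₀ (T^[n] x) < ε / 5 := hx₀' _ (by
      simpa [dist_comm] using hzball)
    calc LD T x y ≤ LD T (T^[n] x) (T^[n] y) := LD_iterate T x y n
      _ ≤ LD T (T^[n] x) x₀ + LD T x₀ (T^[n] y) := LD_triangle T _ _ _
      _ = LD T x₀ (T^[n] x) + LD T x₀ (T^[n] y) := by rw [LD_symm]
      _ < ε / 5 + ε / 5 := add_lt_add h2 h1
      _ = 2 * (ε / 5) := by ring
  choose η hηpos hη using key
  -- uniform step via finite subcover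
  have hcover : (Set.univ : Set X) ⊆ ⋃ x : X, Metric.ball x (η x / 2) := by
    intro x _
    exact Set.mem_iUnion.mpr ⟨x, Metric.mem_ball_self (by have := hηpos x; linarith)⟩
  obtain ⟨t, ht⟩ := isCompact_univ.elim_finite_subcover
    (fun x : X => Metric.ball x (η x / 2)) (fun x => Metric.isOpen_ball) hcover
  have htne : t.Nonempty := by
    obtain ⟨x⟩ := ‹Nonempty X›
    obtain ⟨i, hi, _⟩ := Set.mem_iUnion₂.mp (ht (Set.mem_univ x))
    exact ⟨i, hi⟩
  set δ : ℝ := t.inf' htne (fun i => η i / 2) with hδdef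
  have hδpos : 0 < δ := by
    rw [hδdef, Finset.lt_inf'_iff]
    intro i _
    have := hηpos i; linarith
  refine ⟨δ, hδpos, fun x y hxy => ?_⟩
  obtain ⟨i, hi, hxi⟩ := Set.mem_iUnion₂.mp (ht (Set.mem_univ x))
  have hxi' : dist x i < η i / 2 := Metric.mem_ball.mp hxi
  have hix : dist i x < η i := by
    rw [dist_comm] at hxi'; have := hηpos i; linarith
  have hiy : dist i y < η i := by
    have hδle : δ ≤ η i / 2 := Finset.inf'_le _ hi
    calc dist i y ≤ dist i x + dist x y := dist_triangle i x y
      _ < η i / 2 + δ := by rw [dist_comm i x]; exact add_lt_add hxi' hxy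
      _ ≤ η i / 2 + η i / 2 := by linarith
      _ = η i := by ring
  have h1 : LD T i x < 2 * (ε / 5) := hη i x hix
  have h2 : LD T i y < 2 * (ε / 5) := hη i y hiy
  have : LD T x y < ε := by
    calc LD T x y ≤ LD T x i + LD T i y := LD_triangle T _ _ _
      _ = LD T i x + LD T i y := by rw [LD_symm]
      _ < 2 * (ε / 5) + 2 * (ε / 5) := add_lt_add h1 h2
      _ < ε := by linarith
  exact this
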